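/- arXiv:0911.2692 — 4 statements merged into one kernel-verified Lean document; each statement's English description precedes it below -/
import Mathlib

section
/- Tverberg's theorem in dimension 1: any finite set of 2r-1 real numbers can be partitioned into r pairwise disjoint subsets whose convex hulls (intervals) have a common point. -/
/-!
Sort the points as `x₀ ≤ x₁ ≤ ⋯ ≤ x_{2r-2}` and fold the indices about the middle one,
`i ↦ min i (2r-2-i)`. Each fibre of the folding contains a pair `{x_j, x_{2r-2-j}}` with
`j ≤ r-1 ≤ 2r-2-j`, so its convex hull contains the median `x_{r-1}`.
-/

open Finset

def foldAboutMiddle (r : ℕ) (i : Fin (2 * r - 1)) : Fin r :=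
  ⟨min i (2 * r - 2 - i), by omega⟩

theorem foldAboutMiddle_castLE (r : ℕ) (j : Fin r) :
    foldAboutMiddle r (Fin.castLE (by omega) j) = j :=
  Fin.ext <| by simp only [foldAboutMiddle, Fin.val_castLE]; omega

theorem foldAboutMiddle_rev (r : ℕ) (i : Fin (2 * r - 1)) :
    foldAboutMiddle r i.rev = foldAboutMiddle r i :=
  Fin.ext <| by simp only [foldAboutMiddle, Fin.val_rev]; omega

theorem mem_convexHull_image_of_le_of_le {ι : Type*} (f : ι → ℝ) {s : Set ι} {a b : ι}
    (ha : a ∈ s) (hb : b ∈ s) {p : ℝ} (hap : f a ≤ p) (hpb : p ≤ f b) :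
    p ∈ convexHull ℝ (f '' s) :=
  segment_subset_convexHull (Set.mem_image_of_mem f ha) (Set.mem_image_of_mem f hb) <| by
    rw [segment_eq_Icc (hap.trans hpb)]
    exact ⟨hap, hpb⟩

/-- Tverberg's theorem in dimension 1: any multiset of `2r-1` real numbers (given as a
function on `Fin (2r-1)`) can be partitioned into `r` pairwise disjoint subsets whose
convex hulls have a common point. -/
theorem tverberg_dim_one (r : ℕ) (hr : 1 ≤ r) (f : Fin (2 * r - 1) → ℝ) :
    ∃ F : Fin r → Finset (Fin (2 * r - 1)),
      (∀ j k, j ≠ k → Disjoint (F j) (F k)) ∧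
      (Finset.univ.biUnion F = Finset.univ) ∧
      ∃ p : ℝ, ∀ j, p ∈ convexHull ℝ (f '' (F j : Set (Fin (2 * r - 1)))) := by
  set σ := Tuple.sort f
  set c := foldAboutMiddle r ∘ σ.symm
  refine ⟨fun j => univ.filter (c · = j),
    fun j k hjk =>
      Set.pairwiseDisjoint_filter c Set.univ univ (Set.mem_univ j) (Set.mem_univ k) hjk,
    biUnion_filter_eq_of_maps_to fun _ _ => mem_univ _, ?_⟩
  let median : Fin (2 * r - 1) := ⟨r - 1, by omega⟩
  refine ⟨f (σ median), fun j => ?_⟩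
  let lower : Fin (2 * r - 1) := Fin.castLE (by omega) j
  have hc_lower : c (σ lower) = j := by simp [c, lower, foldAboutMiddle_castLE]
  have hc_upper : c (σ lower.rev) = j := by
    simp [c, lower, foldAboutMiddle_rev, foldAboutMiddle_castLE]
  have hmono : Monotone (f ∘ σ) := Tuple.monotone_sort f
  refine mem_convexHull_image_of_le_of_le f (a := σ lower) (b := σ lower.rev)
    (by simpa using hc_lower) (by simpa using hc_upper) (hmono ?_) (hmono ?_)
  · simp only [Fin.le_def, lower, median, Fin.val_castLE]; omega
  · simp only [Fin.le_def, lower, median, Fin.val_rev, Fin.val_castLE]; omega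
end

section
/- Colored Tverberg in dimension 1 for prime r: let C ⊂ ℝ be a set of 2(r-1)+1 = 2r-1 points colored C = ⊎ C_i with each |C_i| ≤ r-1. Then C can be partitioned into r colorful sets F_1,...,F_r (each |C_i ∩ F_j| ≤ 1) whose convex hulls have a common point. -/
/-!
Sort the `2n + 1` points and let `m` be the median, so that `n` points lie below `m` and `n`
above it. Each colour occurs at most `n` times in total, which is exactly Hall's condition for
matching the lower points with the upper points so that matched points have different colours.
The `n` matched pairs together with `{m}` form the partition, and every hull contains `m`
because each pair straddles it.
-/

open Finset Function Fin

theorem exists_equiv_forall_ne {ι κ β : Type*} [Fintype ι] [Fintype κ] [DecidableEq β]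
    (a : ι → β) (b : κ → β) (hcard : Fintype.card ι = Fintype.card κ)
    (hcol : ∀ c, #{i | a i = c} + #{j | b j = c} ≤ Fintype.card κ) :
    ∃ e : ι ≃ κ, ∀ i, b (e i) ≠ a i := by
  have hall : ∀ A : Finset ι, #A ≤ #{j | ∃ i ∈ A, b j ≠ a i} := by
    intro A
    obtain rfl | ⟨i₀, hi₀⟩ := A.eq_empty_or_nonempty
    · simp
    by_cases hmono : ∀ i ∈ A, a i = a i₀
    · calc #A ≤ #{i | a i = a i₀} := card_le_card fun i hi => by simpa using hmono i hi
        _ ≤ #{j | b j ≠ a i₀} := by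
          simp only [ne_eq]
          have := hcol (a i₀)
          have := card_filter_add_card_filter_not (s := univ) (fun j => b j = a i₀)
          rw [card_univ] at this
          omega
        _ ≤ _ := card_le_card fun j hj => by
          simp only [mem_filter] at hj ⊢
          exact ⟨hj.1, i₀, hi₀, hj.2⟩
    · push Not at hmono
      obtain ⟨i₁, hi₁, hne⟩ := hmono
      have hfull : ({j | ∃ i ∈ A, b j ≠ a i} : Finset κ) = univ := by
        refine eq_univ_of_forall fun j => mem_filter.mpr ⟨mem_univ j, ?_⟩
        by_cases h : b j = a i₀
        · exact ⟨i₁, hi₁, h ▸ hne.symm⟩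
        · exact ⟨i₀, hi₀, h⟩
      rw [hfull, card_univ, ← hcard]
      exact card_le_univ A
  obtain ⟨f, hf, hfne⟩ := (Fintype.all_card_le_filter_rel_iff_exists_injective _).mp hall
  exact ⟨.ofBijective f ((Fintype.bijective_iff_injective_and_card f).mpr ⟨hf, hcard⟩), hfne⟩

lemma Finset.card_filter_orderEmbOfFin {α : Type*} [LinearOrder α] (C : Finset α) {k : ℕ}
    (h : #C = k) (p : α → Prop) [DecidablePred p] :
    #{i | p (C.orderEmbOfFin h i)} = #{x ∈ C | p x} := by
  conv_rhs => rw [← map_orderEmbOfFin_univ C h, filter_map, card_map]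
  rfl

namespace Fin

lemma univ_eq_insert_castAdd_last (n : ℕ) :
    (univ : Finset (Fin (n + 1 + n))) = insert (castAdd n (last n))
      (univ.image (fun i : Fin n => castAdd n i.castSucc) ∪ univ.image (natAdd (n + 1))) :=
  (eq_univ_of_forall <| by simp [forall_fin_add, forall_iff_castSucc]).symm

lemma card_filter_castAdd_add_card_filter_natAdd_le {n : ℕ} (p : Fin (n + 1 + n) → Prop)
    [DecidablePred p] :
    #{i : Fin n | p (castAdd n i.castSucc)} + #{j : Fin n | p (natAdd (n + 1) j)} ≤ #{k | p k} := by
  simp only [card_filter, sum_univ_add, sum_univ_castSucc]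
  omega

end Fin

section PairBlocks

variable {α : Type*} [DecidableEq α] {n : ℕ}

def pairBlocks (m : α) (s t : Fin n → α) : Fin (n + 1) → Finset α :=
  Fin.lastCases {m} fun i => {s i, t i}

@[simp] lemma pairBlocks_last (m : α) (s t : Fin n → α) : pairBlocks m s t (last n) = {m} :=
  lastCases_last

@[simp] lemma pairBlocks_castSucc (m : α) (s t : Fin n → α) (i : Fin n) :
    pairBlocks m s t i.castSucc = {s i, t i} :=
  lastCases_castSucc _

lemma biUnion_pairBlocks (m : α) (s t : Fin n → α) :
    univ.biUnion (pairBlocks m s t) = insert m (univ.image s ∪ univ.image t) := by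
  ext x
  simp only [mem_biUnion, mem_univ, true_and, exists_fin_succ', pairBlocks_castSucc,
    pairBlocks_last, mem_insert, mem_singleton, mem_union, mem_image]
  grind

lemma card_filter_pairBlocks_le_one {β : Type*} [DecidableEq β] {m : α} {s t : Fin n → α}
    {col : α → β} (hst : ∀ i, col (s i) ≠ col (t i)) (c : β) (j : Fin (n + 1)) :
    #{x ∈ pairBlocks m s t j | col x = c} ≤ 1 := by
  induction j using lastCases with
  | last => exact (card_filter_le _ _).trans (by simp)
  | cast i =>
    refine card_le_one.mpr fun x hx y hy => ?_
    simp only [pairBlocks_castSucc, mem_filter, mem_insert, mem_singleton] at hx hy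
    have := hst i
    grind

lemma pairwise_disjoint_pairBlocks [Preorder α] {m : α} {s t : Fin n → α}
    (hs : Injective s) (ht : Injective t) (hsm : ∀ i, s i < m) (hmt : ∀ i, m < t i) :
    Pairwise (Disjoint on pairBlocks m s t) := by
  have hts_ne : ∀ i j, t i ≠ s j := fun i j => ((hsm j).trans (hmt i)).ne'
  have hms_ne : ∀ i, m ≠ s i := fun i => (hsm i).ne'
  have hmt_ne : ∀ i, m ≠ t i := fun i => (hmt i).ne
  intro j k hjk
  induction j using lastCases <;> induction k using lastCases <;>
    simp_all [onFun, disjoint_insert_right, eq_comm, hs.ne_iff, ht.ne_iff]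

lemma mem_convexHull_pairBlocks {𝕜 : Type*} [Field 𝕜] [LinearOrder 𝕜] [IsStrictOrderedRing 𝕜]
    [DecidableEq 𝕜] {m : 𝕜} {s t : Fin n → 𝕜} (hsm : ∀ i, s i ≤ m) (hmt : ∀ i, m ≤ t i)
    (j : Fin (n + 1)) : m ∈ convexHull 𝕜 (pairBlocks m s t j : Set 𝕜) := by
  induction j using lastCases with
  | last => simp
  | cast i =>
    rw [pairBlocks_castSucc, coe_pair, convexHull_pair, segment_eq_Icc ((hsm i).trans (hmt i))]
    exact ⟨hsm i, hmt i⟩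

end PairBlocks

theorem colored_tverberg_dim_one_general (r : ℕ)
    (C : Finset ℝ) (hC : C.card = 2 * r - 1)
    (col : ℝ → ℕ)
    (hcol : ∀ i, (C.filter (fun x => col x = i)).card ≤ r - 1) :
    ∃ F : Fin r → Finset ℝ,
      (∀ j k, j ≠ k → Disjoint (F j) (F k)) ∧
      (Finset.univ.biUnion F = C) ∧
      (∀ i j, ((F j).filter (fun x => col x = i)).card ≤ 1) ∧
      ∃ p : ℝ, ∀ j, p ∈ convexHull ℝ ((F j : Set ℝ)) := by
  obtain _ | n := r
  · refine ⟨fun _ => ∅, fun j => j.elim0, ?_, fun _ j => j.elim0, 0, fun j => j.elim0⟩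
    simpa [eq_comm] using hC
  have hC' : #C = n + 1 + n := by omega
  set x := C.orderEmbOfFin hC'
  set m := x (castAdd n (last n))
  set s : Fin n → ℝ := fun i => x (castAdd n i.castSucc)
  set t : Fin n → ℝ := fun j => x (natAdd (n + 1) j)
  obtain ⟨σ, hσ⟩ := exists_equiv_forall_ne (col ∘ s) (col ∘ t) rfl fun c => by
    simpa [s, t] using
      (card_filter_castAdd_add_card_filter_natAdd_le (fun k => col (x k) = c)).trans
        ((C.card_filter_orderEmbOfFin hC' _).trans_le (hcol c))
  have hsm : ∀ i, s i < m := fun i => x.strictMono (by simp [Fin.lt_def])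
  have hmt : ∀ j, m < t j := fun j => x.strictMono (by simp [Fin.lt_def]; omega)
  have hs : Injective s := x.injective.comp ((castAdd_injective _ _).comp (castSucc_injective _))
  have ht : Injective t := x.injective.comp (natAdd_injective _ _)
  refine ⟨pairBlocks m s (t ∘ σ), pairwise_disjoint_pairBlocks hs (ht.comp σ.injective) hsm
    (fun i => hmt _), ?_,
    fun c => card_filter_pairBlocks_le_one (fun i => (hσ i).symm) c, m,
    mem_convexHull_pairBlocks (fun i => (hsm i).le) fun i => (hmt _).le⟩
  rw [biUnion_pairBlocks, image_comp, image_univ_equiv, ← image_orderEmbOfFin_univ C hC',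
    univ_eq_insert_castAdd_last, image_insert, image_union, image_image, image_image]
  rfl

/-- Colored Tverberg in dimension 1 for a prime `r`: a set `C ⊂ ℝ` of `2r-1` points,
colored (by `col`) with all color classes of size at most `r-1`, can be partitioned into
`r` colorful sets whose convex hulls have a common point. -/
theorem colored_tverberg_dim_one (r : ℕ) (hr : r.Prime)
    (C : Finset ℝ) (hC : C.card = 2 * r - 1)
    (col : ℝ → ℕ)
    (hcol : ∀ i, (C.filter (fun x => col x = i)).card ≤ r - 1) :
    ∃ F : Fin r → Finset ℝ,
      (∀ j k, j ≠ k → Disjoint (F j) (F k)) ∧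
      (Finset.univ.biUnion F = C) ∧
      (∀ i j, ((F j).filter (fun x => col x = i)).card ≤ 1) ∧
      ∃ p : ℝ, ∀ j, p ∈ convexHull ℝ ((F j : Set ℝ)) :=
  colored_tverberg_dim_one_general r C hC col hcol
end

section
/- Reduction Lemma (affine case, k = 0): if the colored Tverberg statement holds in ℝ^d for parameter r, then it also holds in ℝ^{d-1} for the same r. Concretely: suppose for every set of (r-1)(d+1)+1 points in ℝ^d colored with classes of size ≤ r-1 there is a colorful Tverberg r-partition; then the same holds for every set of (r-1)d+1 points in ℝ^{d-1} colored with classes of size ≤ r-1. -/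
/-- The affine colored Tverberg statement in `ℝ^d` for parameter `r`: every set of
`(r-1)(d+1)+1` points colored with classes of size `≤ r-1` admits a colorful Tverberg
`r`-partition. -/
def ColoredTverberg (d r : ℕ) : Prop :=
  letI : DecidableEq (EuclideanSpace ℝ (Fin d)) := Classical.decEq _
  ∀ (C : Finset (EuclideanSpace ℝ (Fin d))) (col : EuclideanSpace ℝ (Fin d) → ℕ),
    C.card = (r - 1) * (d + 1) + 1 →
    (∀ i, (C.filter (fun x => col x = i)).card ≤ r - 1) →
    ∃ F : Fin r → Finset (EuclideanSpace ℝ (Fin d)),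
      (∀ j k, j ≠ k → Disjoint (F j) (F k)) ∧
      (Finset.univ.biUnion F = C) ∧
      (∀ i j, ((F j).filter (fun x => col x = i)).card ≤ 1) ∧
      (⋂ j, convexHull ℝ ((F j : Set (EuclideanSpace ℝ (Fin d))))).Nonempty

/-!
Embed `ℝ^e` as the hyperplane `x_e = 0` of `ℝ^(e+1)` and add `r - 1` points strictly above it,
each with a fresh colour of its own. A colorful Tverberg `r`-partition of the enlarged
configuration has a part containing none of the new points, so the common point `z` lies on the
hyperplane. Since the height `x_e` is nonnegative on every point and vanishes at `z`, each convex
combination representing `z` only charges points of the hyperplane; hence intersecting every part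
with the hyperplane gives a colorful Tverberg partition of the original configuration.
-/

open Finset Function

def IsColorfulTverbergPartition {E κ : Type*} [AddCommGroup E] [Module ℝ E] [DecidableEq E]
    [Fintype κ] (C : Finset E) (col : E → ℕ) (F : κ → Finset E) : Prop :=
  (∀ j k, j ≠ k → Disjoint (F j) (F k)) ∧ univ.biUnion F = C ∧
    (∀ i j, #{x ∈ F j | col x = i} ≤ 1) ∧ (⋂ j, convexHull ℝ (F j : Set E)).Nonempty

theorem Finset.exists_disjoint_of_card_lt {α κ : Type*} [Fintype κ] {F : κ → Finset α}
    (hF : Pairwise (Disjoint on F)) {Q : Finset α} (hQ : #Q < Fintype.card κ) :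
    ∃ j, Disjoint (F j) Q := by
  by_contra! hmeet
  choose f hfF hfQ using fun j => not_disjoint_iff.1 (hmeet j)
  have hf : Injective f := fun j k hjk =>
    hF.eq (not_disjoint_iff.2 ⟨f j, hfF j, hjk ▸ hfF k⟩)
  have hcard := card_le_card_of_injOn f (s := univ) (fun j _ => hfQ j) hf.injOn
  rw [card_univ] at hcard
  omega

theorem mem_convexHull_inter_ker_of_nonneg {𝕜 E : Type*} [Field 𝕜] [LinearOrder 𝕜]
    [IsStrictOrderedRing 𝕜] [AddCommGroup E] [Module 𝕜 E] {s : Finset E} {f : E →ₗ[𝕜] 𝕜}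
    (hf : ∀ x ∈ s, 0 ≤ f x) {z : E} (hz : z ∈ convexHull 𝕜 (s : Set E)) (hfz : f z = 0) :
    z ∈ convexHull 𝕜 (↑s ∩ LinearMap.ker f : Set E) := by
  classical
  obtain ⟨w, hw₀, hw₁, rfl⟩ := Finset.mem_convexHull'.1 hz
  have hterm : ∀ y ∈ s, w y * f y = 0 := by
    refine (sum_eq_zero_iff_of_nonneg fun y hy => mul_nonneg (hw₀ y hy) (hf y hy)).1 ?_
    simpa only [map_sum, map_smul, smul_eq_mul] using hfz
  set s₀ := s.filter (f · = 0)
  have hs₀ : s₀ ⊆ s := filter_subset _ s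
  have hw : ∀ y ∈ s, y ∉ s₀ → w y = 0 := fun y hy hy₀ =>
    (mul_eq_zero.1 (hterm y hy)).resolve_right fun h => hy₀ (mem_filter.2 ⟨hy, h⟩)
  have hcoe : (↑s ∩ LinearMap.ker f : Set E) = s₀ := by ext; simp [s₀]
  rw [hcoe, Finset.mem_convexHull']
  refine ⟨w, fun y hy => hw₀ y (hs₀ hy), by rw [sum_subset hs₀ hw, hw₁], ?_⟩
  exact sum_subset hs₀ fun y hy hy₀ => by rw [hw y hy hy₀, zero_smul]

section Coloring

variable {α β : Type*} [DecidableEq β] {ι : α → β} {C : Finset α} {m : ℕ}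

theorem card_filter_image_union_le (hι : Injective ι) {Q : Finset β} {col : β → ℕ} (hm : 1 ≤ m)
    (hC : ∀ i, #{x ∈ C | col (ι x) = i} ≤ m) (hQ : Set.InjOn col Q)
    (hCQ : ∀ x ∈ C, ∀ y ∈ Q, col (ι x) ≠ col y) (i : ℕ) :
    #{y ∈ C.image ι ∪ Q | col y = i} ≤ m := by
  rw [filter_union, filter_image]
  by_cases hi : ∃ x ∈ C, col (ι x) = i
  · obtain ⟨x, hx, rfl⟩ := hi
    have hQi : {y ∈ Q | col y = col (ι x)} = ∅ :=
      filter_eq_empty_iff.2 fun y hy => (hCQ x hx y hy).symm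
    rw [hQi, union_empty, card_image_of_injective _ hι]
    exact hC _
  · push Not at hi
    rw [filter_eq_empty_iff.2 hi, image_empty, empty_union]
    refine le_trans (card_le_one.2 fun a ha b hb => ?_) hm
    rw [mem_filter] at ha hb
    exact hQ ha.1 hb.1 (ha.2.trans hb.2.symm)

theorem exists_extend_with_fresh_colors (hι : Injective ι) {q : ℕ → β} (hq : Injective q)
    (hqι : ∀ t x, ι x ≠ q t) {col : α → ℕ} (hm : 1 ≤ m) (hcol : ∀ i, #{x ∈ C | col x = i} ≤ m)
    (n : ℕ) :
    ∃ col' : β → ℕ, col' ∘ ι = col ∧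
      ∀ i, #{y ∈ C.image ι ∪ (range n).image q | col' y = i} ≤ m := by
  let col' := extend ι col (extend q (C.sup col + 1 + ·) 0)
  have hcol'ι : ∀ x, col' (ι x) = col x := hι.extend_apply _ _
  have hcol'q : ∀ t, col' (q t) = C.sup col + 1 + t := fun t =>
    (extend_apply' _ _ _ fun ⟨x, hx⟩ => hqι t x hx).trans (hq.extend_apply _ _ t)
  refine ⟨col', extend_comp hι _ _, card_filter_image_union_le hι hm ?_ ?_ ?_⟩
  · simpa only [hcol'ι] using hcol
  · simp only [coe_image, Set.InjOn, Set.forall_mem_image, hcol'q]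
    intro s _ t _ hst
    rw [Nat.add_left_cancel hst]
  · simp only [mem_image, forall_exists_index, and_imp]
    rintro x hx _ t - rfl
    rw [hcol'q, hcol'ι]
    have := le_sup (f := col) hx
    omega

end Coloring

section Lift

variable {E E' κ : Type*} [AddCommGroup E] [Module ℝ E] [AddCommGroup E'] [Module ℝ E']
  {ι : E →ₗ[ℝ] E'} {L : E' →ₗ[ℝ] ℝ} {q : ℕ → E'}

theorem injective_of_apply_eq_natCast_add_one (hLq : ∀ t : ℕ, L (q t) = t + 1) :
    Injective q := fun s t hst => by
  simpa [hLq] using congrArg L hst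

theorem apply_ne_of_apply_eq_natCast_add_one (hLι : ∀ x, L (ι x) = 0)
    (hLq : ∀ t : ℕ, L (q t) = t + 1) (t : ℕ) (x : E) : ι x ≠ q t := fun h => by
  have hL := congrArg L h
  rw [hLι, hLq] at hL
  exact Nat.cast_add_one_ne_zero t hL.symm

variable [DecidableEq E'] {C : Finset E}

theorem card_image_union_image_range (hι : Injective ι) (hLι : ∀ x, L (ι x) = 0)
    (hLq : ∀ t : ℕ, L (q t) = t + 1) (n : ℕ) :
    #(C.image ι ∪ (range n).image q) = #C + n := by
  rw [card_union_of_disjoint, card_image_of_injective _ hι,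
    card_image_of_injective _ (injective_of_apply_eq_natCast_add_one hLq), card_range]
  simp only [disjoint_left, mem_image, mem_range, not_exists, not_and]
  rintro _ ⟨x, -, rfl⟩ t -
  exact (apply_ne_of_apply_eq_natCast_add_one hLι hLq t x).symm

variable [Fintype κ] {Q : Finset E'}

theorem mem_iInter_image_convexHull_preimage (hLι : ∀ x, L (ι x) = 0) (hQ : ∀ y ∈ Q, 0 < L y)
    (hQκ : #Q < Fintype.card κ) {F : κ → Finset E'} (hdisj : Pairwise (Disjoint on F))
    (hF : ∀ j, F j ⊆ C.image ι ∪ Q) {z : E'} (hz : z ∈ ⋂ j, convexHull ℝ (F j : Set E')) :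
    z ∈ ⋂ j, ι '' convexHull ℝ (ι ⁻¹' F j) := by
  have hheight : ∀ j, ∀ y ∈ F j, y ∈ Set.range ι ∧ L y = 0 ∨ y ∈ Q ∧ 0 < L y := by
    intro j y hy
    rcases mem_union.1 (hF j hy) with hyι | hyQ
    · obtain ⟨x, -, rfl⟩ := mem_image.1 hyι
      exact .inl ⟨⟨x, rfl⟩, hLι x⟩
    · exact .inr ⟨hyQ, hQ y hyQ⟩
  obtain ⟨j₀, hj₀⟩ := exists_disjoint_of_card_lt hdisj hQκ
  have hLz : L z = 0 := by
    refine convexHull_min (fun y hy => ?_) (LinearMap.ker L).convex (Set.mem_iInter.1 hz j₀)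
    rcases hheight j₀ y hy with h | h
    · exact h.2
    · exact absurd h.1 (disjoint_left.1 hj₀ hy)
  refine Set.mem_iInter.2 fun j => ?_
  have hker : (↑(F j) ∩ LinearMap.ker L : Set E') = ↑(F j) ∩ Set.range ι := by
    ext y
    refine and_congr_right fun hy => ?_
    rcases hheight j y hy with h | h
    · simp [h.1, h.2]
    · exact iff_of_false h.2.ne' fun ⟨x, hx⟩ => h.2.ne' (hx ▸ hLι x)
  rw [LinearMap.image_convexHull, Set.image_preimage_eq_inter_range, ← hker]
  refine mem_convexHull_inter_ker_of_nonneg (fun y hy => ?_) (Set.mem_iInter.1 hz j) hLz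
  rcases hheight j y hy with h | h
  · exact h.2.ge
  · exact h.2.le

theorem IsColorfulTverbergPartition.preimage [DecidableEq E] (hι : Injective ι)
    (hLι : ∀ x, L (ι x) = 0) (hQ : ∀ y ∈ Q, 0 < L y) (hQκ : #Q < Fintype.card κ)
    {col : E' → ℕ} {F : κ → Finset E'} (hF : IsColorfulTverbergPartition (C.image ι ∪ Q) col F) :
    IsColorfulTverbergPartition C (col ∘ ι) fun j => (F j).preimage ι hι.injOn := by
  obtain ⟨hdisj, hunion, hcol, z, hz⟩ := hF
  have hmem : ∀ y, (∃ j, y ∈ F j) ↔ y ∈ C.image ι ∪ Q := by simp [← hunion]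
  have hιQ : ∀ x, ι x ∉ Q := fun x hx => (hQ _ hx).ne' (hLι x)
  refine ⟨fun j k hjk => disjoint_preimage (hdisj j k hjk), ?_, fun i j => ?_, ?_⟩
  · ext x
    simp only [mem_biUnion, mem_univ, true_and, mem_preimage, hmem, mem_union, hιQ, or_false,
      hι.mem_finset_image]
  · refine (card_le_card_of_injOn ι (fun x hx => ?_) hι.injOn).trans (hcol i j)
    simpa using hx
  · have hsub : ∀ j, F j ⊆ C.image ι ∪ Q := fun j y hy => (hmem y).1 ⟨j, hy⟩
    have hzι := mem_iInter_image_convexHull_preimage hLι hQ hQκ hdisj hsub hz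
    have : Nonempty κ := Fintype.card_pos_iff.1 (by omega)
    rw [← hι.injOn.image_iInter_eq] at hzι
    obtain ⟨x, hx, -⟩ := hzι
    exact ⟨x, by simpa only [coe_preimage] using hx⟩

theorem exists_isColorfulTverbergPartition_of_lift [DecidableEq E] (hι : Injective ι)
    (hLι : ∀ x, L (ι x) = 0) (hLq : ∀ t : ℕ, L (q t) = t + 1) {r : ℕ} (hr : 2 ≤ r)
    {col : E → ℕ} (hcol : ∀ i, #{x ∈ C | col x = i} ≤ r - 1)
    (h : ∀ col' : E' → ℕ, (∀ i, #{y ∈ C.image ι ∪ (range (r - 1)).image q | col' y = i} ≤ r - 1) →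
      ∃ F : Fin r → Finset E',
        IsColorfulTverbergPartition (C.image ι ∪ (range (r - 1)).image q) col' F) :
    ∃ F : Fin r → Finset E, IsColorfulTverbergPartition C col F := by
  have hq := injective_of_apply_eq_natCast_add_one hLq
  obtain ⟨col', rfl, hcol'⟩ := exists_extend_with_fresh_colors hι hq
    (apply_ne_of_apply_eq_natCast_add_one hLι hLq) (by omega) hcol (r - 1)
  obtain ⟨F, hF⟩ := h col' hcol'
  refine ⟨_, hF.preimage hι hLι ?_ ?_⟩
  · simp only [mem_image, forall_exists_index, and_imp]
    rintro _ t - rfl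
    rw [hLq]
    positivity
  · rw [card_image_of_injective _ hq, card_range, Fintype.card_fin]
    omega

end Lift

def appendZero (e : ℕ) : EuclideanSpace ℝ (Fin e) →ₗ[ℝ] EuclideanSpace ℝ (Fin (e + 1)) where
  toFun x := WithLp.toLp 2 (Fin.snoc x 0)
  map_add' x y := by ext i; refine Fin.lastCases ?_ (fun i => ?_) i <;> simp
  map_smul' c x := by ext i; refine Fin.lastCases ?_ (fun i => ?_) i <;> simp

theorem appendZero_injective (e : ℕ) : Injective (appendZero e) := fun x y hxy => by
  ext i
  simpa [appendZero] using congrFun (congrArg WithLp.ofLp hxy) i.castSucc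

theorem appendZero_apply_last {e : ℕ} (x : EuclideanSpace ℝ (Fin e)) :
    appendZero e x (Fin.last e) = 0 := by
  simp [appendZero]

/-- Reduction Lemma (affine case, `k = 0`): if the colored Tverberg statement holds in `ℝ^d`
for parameter `r`, then it also holds in `ℝ^{d-1}`. -/
theorem colored_tverberg_reduction (r d : ℕ) (hr : 2 ≤ r) (hd : 1 ≤ d)
    (h : ColoredTverberg d r) : ColoredTverberg (d - 1) r := by
  obtain ⟨e, rfl⟩ : ∃ e, d = e + 1 := ⟨d - 1, by omega⟩
  rw [Nat.add_sub_cancel]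
  -- exactly the instances inside `ColoredTverberg`; those of `classical` do not unify with them
  let := Classical.decEq (EuclideanSpace ℝ (Fin e))
  let := Classical.decEq (EuclideanSpace ℝ (Fin (e + 1)))
  intro C col hC hcol
  have hLq : ∀ t : ℕ, EuclideanSpace.projₗ (Fin.last e)
      (EuclideanSpace.single (Fin.last e) ((t : ℝ) + 1)) = t + 1 := by simp
  refine exists_isColorfulTverbergPartition_of_lift (appendZero_injective e)
    appendZero_apply_last hLq hr hcol fun col' hcol' => h _ col' ?_ hcol'
  rw [card_image_union_image_range (appendZero_injective e) appendZero_apply_last hLq, hC]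
  ring
end

section
/- Tightness construction in ℝ^{d-k} (single configuration): let r ≥ 2 and n = d-k ≥ 1. Place a point set C consisting of r-1 copies at each of the n+1 vertices of an n-simplex σ in ℝ^n together with one point at the centroid c of σ, so |C| = (r-1)(n+1)+1. Then every partition of C into r nonempty parts whose convex hulls have a common point has the centroid c as its unique common point; i.e., the only Tverberg point of C is c. -/
/-!
Use the barycentric coordinates `λᵢ` of the simplex. If `λᵢ p > 0`, every part must contain a
copy of `vᵢ` or the centroid, since otherwise its hull lies in the facet `λᵢ = 0`. The r - 1
parts without the centroid then use up all r - 1 copies of `vᵢ`, so the part `F j₀` holding the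
centroid contains no copy of any vertex in the support of `p`. On `F j₀` this gives
`λᵢ ≤ λₖ` for every `i` in the support and every `k`, hence the support is everything, `F j₀`
contains only the centroid, and `p = c`.
-/

open Finset

theorem AffineMap.le_of_mem_convexHull {E : Type*} [AddCommGroup E] [Module ℝ E]
    (φ ψ : E →ᵃ[ℝ] ℝ) {s : Set E} (hs : ∀ x ∈ s, φ x ≤ ψ x) {p : E}
    (hp : p ∈ convexHull ℝ s) : φ p ≤ ψ p := by
  have hsub : s ⊆ (φ - ψ) ⁻¹' Set.Iic 0 := fun x hx => sub_nonpos.mpr (hs x hx)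
  exact sub_nonpos.mp (convexHull_min hsub ((convex_Iic 0).affine_preimage (φ - ψ)) hp)

theorem Fintype.card_le_of_pairwise_disjoint_of_forall_exists {κ γ β : Type*} [Fintype κ]
    [Fintype γ] (F : κ → Finset β) (hdisj : ∀ j j', j ≠ j' → Disjoint (F j) (F j'))
    (g : γ → β) (hg : ∀ j, ∃ m, g m ∈ F j) : Fintype.card κ ≤ Fintype.card γ := by
  choose sel hsel using hg
  refine Fintype.card_le_of_injective sel fun j j' h => ?_
  by_contra hne
  exact disjoint_left.mp (hdisj j j' hne) (hsel j) (h ▸ hsel j')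

namespace AffineBasis

variable {ι E : Type*} [AddCommGroup E] [Module ℝ E] {r : ℕ}
  (b : AffineBasis ι ℝ E) {f : (ι × Fin (r - 1)) ⊕ Unit → E}
  (hf₁ : ∀ i m, f (Sum.inl (i, m)) = b i)
  {F : Fin r → Finset ((ι × Fin (r - 1)) ⊕ Unit)} {p : E}
  (hp : ∀ j, p ∈ convexHull ℝ (f '' (F j : Set ((ι × Fin (r - 1)) ⊕ Unit))))
include hf₁ hp

theorem centroid_mem_or_exists_copy_mem_of_coord_pos {i : ι} (hi : 0 < b.coord i p)
    (j : Fin r) : Sum.inr () ∈ F j ∨ ∃ m, Sum.inl (i, m) ∈ F j := by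
  by_contra! h
  refine hi.not_ge (b.coord i |>.le_of_mem_convexHull (AffineMap.const ℝ E 0) ?_ (hp j))
  rintro - ⟨⟨k, m⟩ | ⟨⟩, hx, rfl⟩
  · have hik : i ≠ k := by rintro rfl; exact h.2 m hx
    simp [hf₁, b.coord_apply_ne hik]
  · exact absurd hx h.1

variable (hdisj : ∀ j j', j ≠ j' → Disjoint (F j) (F j'))
include hdisj

theorem copy_notMem_of_coord_pos {j₀ : Fin r} (hj₀ : Sum.inr () ∈ F j₀) {i : ι}
    (hi : 0 < b.coord i p) (m : Fin (r - 1)) : Sum.inl (i, m) ∉ F j₀ := by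
  intro hm
  have hcopy : ∀ j, ∃ m', Sum.inl (i, m') ∈ F j := fun j => by
    by_cases hj : j = j₀
    · exact ⟨m, hj ▸ hm⟩
    · refine (b.centroid_mem_or_exists_copy_mem_of_coord_pos hf₁ hp hi j).resolve_left ?_
      exact fun hc => disjoint_left.mp (hdisj j j₀ hj) hc hj₀
  have := Fintype.card_le_of_pairwise_disjoint_of_forall_exists F hdisj _ hcopy
  simp only [Fintype.card_fin] at this
  have : 0 < r := j₀.pos
  omega

variable [Fintype ι] (hf₂ : f (Sum.inr ()) = univ.centroid ℝ b)
include hf₂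

theorem coord_pos_of_centroid_mem {j₀ : Fin r} (hj₀ : Sum.inr () ∈ F j₀) (k : ι) :
    0 < b.coord k p := by
  classical
  obtain ⟨i, -, hi⟩ : ∃ i ∈ univ, (0 : ℝ) < b.coord i p :=
    exists_lt_of_sum_lt (by simp [b.sum_coord_apply_eq_one])
  -- on the hull of `F j₀`, `λᵢ` vanishes at every copy of a vertex and agrees with `λₖ` at `c`
  refine hi.trans_le (b.coord i |>.le_of_mem_convexHull (b.coord k) ?_ (hp j₀))
  rintro - ⟨⟨l, m⟩ | ⟨⟩, hx, rfl⟩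
  · have hil : i ≠ l := by
      rintro rfl; exact b.copy_notMem_of_coord_pos hf₁ hp hdisj hj₀ hi m hx
    rw [hf₁, b.coord_apply_ne hil, b.coord_apply]
    positivity
  · simp [hf₂, b.coord_apply_centroid]

theorem eq_centroid_of_mem_convexHull_parts [DecidableEq ι] (hcover : univ.biUnion F = univ) :
    p = univ.centroid ℝ b := by
  obtain ⟨j₀, -, hj₀⟩ := mem_biUnion.mp (hcover ▸ mem_univ (Sum.inr () : _))
  have hsub : f '' (F j₀ : Set _) ⊆ {univ.centroid ℝ b} := by
    rintro - ⟨⟨l, m⟩ | ⟨⟩, hx, rfl⟩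
    · exact absurd hx (b.copy_notMem_of_coord_pos hf₁ hp hdisj hj₀
        (b.coord_pos_of_centroid_mem hf₁ hp hdisj hf₂ hj₀ l) m)
    · exact hf₂
  simpa using convexHull_mono hsub (hp j₀)

end AffineBasis

theorem unique_tverberg_point_of_standard_configuration_general
    (n r : ℕ)
    (v : Fin (n + 1) → EuclideanSpace ℝ (Fin n))
    (hv : AffineIndependent ℝ v)
    (c : EuclideanSpace ℝ (Fin n))
    (hc : c = Finset.centroid ℝ Finset.univ v)
    (f : (Fin (n + 1) × Fin (r - 1)) ⊕ Unit → EuclideanSpace ℝ (Fin n))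
    (hf₁ : ∀ i m, f (Sum.inl (i, m)) = v i)
    (hf₂ : f (Sum.inr ()) = c)
    (F : Fin r → Finset ((Fin (n + 1) × Fin (r - 1)) ⊕ Unit))
    (hdisj : ∀ j j', j ≠ j' → Disjoint (F j) (F j'))
    (hcover : Finset.univ.biUnion F = Finset.univ)
    (p : EuclideanSpace ℝ (Fin n))
    (hp : ∀ j, p ∈ convexHull ℝ (f '' (F j : Set ((Fin (n + 1) × Fin (r - 1)) ⊕ Unit)))) :
    p = c := by
  have hspan : affineSpan ℝ (Set.range v) = ⊤ :=
    hv.affineSpan_eq_top_iff_card_eq_finrank_add_one.mpr (by simp)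
  let b : AffineBasis (Fin (n + 1)) ℝ (EuclideanSpace ℝ (Fin n)) := ⟨v, hv, hspan⟩
  subst hc
  exact b.eq_centroid_of_mem_convexHull_parts hf₁ hp hdisj hf₂ hcover

/-- Tightness construction in `ℝ^n` (`n = d - k`): let `C` consist of `r-1` points at each
of the `n+1` vertices of an `n`-simplex together with one point at the centroid `c`.
Then every partition of `C` into `r` nonempty parts whose convex hulls have a common
point has `c` as this point; i.e. the only Tverberg point of `C` is `c`. -/
theorem unique_tverberg_point_of_standard_configuration
    (n r : ℕ) (hn : 1 ≤ n) (hr : 2 ≤ r)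
    (v : Fin (n + 1) → EuclideanSpace ℝ (Fin n))
    (hv : AffineIndependent ℝ v)
    (c : EuclideanSpace ℝ (Fin n))
    (hc : c = Finset.centroid ℝ Finset.univ v)
    (f : (Fin (n + 1) × Fin (r - 1)) ⊕ Unit → EuclideanSpace ℝ (Fin n))
    (hf₁ : ∀ i m, f (Sum.inl (i, m)) = v i)
    (hf₂ : f (Sum.inr ()) = c)
    (F : Fin r → Finset ((Fin (n + 1) × Fin (r - 1)) ⊕ Unit))
    (hdisj : ∀ j j', j ≠ j' → Disjoint (F j) (F j'))
    (hcover : Finset.univ.biUnion F = Finset.univ)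
    (hne : ∀ j, (F j).Nonempty)
    (p : EuclideanSpace ℝ (Fin n))
    (hp : ∀ j, p ∈ convexHull ℝ (f '' (F j : Set ((Fin (n + 1) × Fin (r - 1)) ⊕ Unit)))) :
    p = c :=
  unique_tverberg_point_of_standard_configuration_general n r v hv c hc f hf₁ hf₂ F hdisj hcover p
    hp
end
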